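/- With the mollification f_δ defined from a continuous function f : ℝ → ℝ, one has: (i) f_δ(t) = f(t) for every t with |t| ≥ δ/2 (indeed whenever σ_δ(t) = 0); and (ii) for every t ∈ ℝ, |f_δ(t) − f(t)| ≤ sup{ |f(a) − f(b)| : a, b ∈ ℝ, |a − b| ≤ δ²/100 }. In particular, if f is uniformly continuous then f_δ → f uniformly on ℝ as δ → 0. -/
import Mathlib


open MeasureTheory Set

noncomputable section

/-- The rescaled cut-off `σ_δ(t) = δ² σ(t/δ)`. -/
def sigmaDelta (σ : ℝ → ℝ) (δ t : ℝ) : ℝ := δ ^ 2 * σ (t / δ)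

/-- The mollification `f_δ(t) = ∫ f(t − σ_δ(t) s) χ(s) ds`. -/
def mollify (χ σ : ℝ → ℝ) (δ : ℝ) (f : ℝ → ℝ) (t : ℝ) : ℝ :=
  ∫ s, f (t - sigmaDelta σ δ t * s) * χ s

/-- The data of a mollifier `χ ∈ C_c^∞(ℝ)` supported in `[-1,1]` with `0 ≤ χ ≤ 1` and
`∫ χ = 1`, together with a cut-off `σ ∈ C_c^∞(ℝ)` supported in `[-1/2,1/2]` with
`σ = 1/100` on `{|t| ≤ 1/4}` and `0 < σ ≤ 1/100` on `{1/4 < |t| < 1/2}`. -/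
def MollifierData (χ σ : ℝ → ℝ) : Prop :=
  ContDiff ℝ (⊤ : ℕ∞) χ ∧ tsupport χ ⊆ Set.Icc (-1) 1 ∧ (∀ t, 0 ≤ χ t ∧ χ t ≤ 1) ∧
  (∫ t, χ t) = 1 ∧
  ContDiff ℝ (⊤ : ℕ∞) σ ∧ tsupport σ ⊆ Set.Icc (-(1/2)) (1/2) ∧
  (∀ t, |t| ≤ 1/4 → σ t = 1/100) ∧
  (∀ t, 1/4 < |t| → |t| < 1/2 → 0 < σ t ∧ σ t ≤ 1/100)

lemma sigma_zero_of_half_le (σ : ℝ → ℝ) (hσc : Continuous σ)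
    (hσsupp : tsupport σ ⊆ Set.Icc (-(1/2)) (1/2)) :
    ∀ x : ℝ, 1/2 ≤ |x| → σ x = 0 := by
  have h0 : ∀ x : ℝ, 1/2 < |x| → σ x = 0 := by
    intro x hx
    apply image_eq_zero_of_notMem_tsupport
    intro h
    have := hσsupp h
    rw [Set.mem_Icc] at this
    exact absurd (abs_le.mpr this) (not_le.mpr hx)
  intro x hx
  rcases eq_or_lt_of_le hx with h | h
  · -- |x| = 1/2, use continuity
    have hx2 : x = 1/2 ∨ x = -(1/2) := by
      rcases abs_eq (by norm_num : (0:ℝ) ≤ 1/2) |>.mp h.symm with h1 | h1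
      · exact Or.inl h1
      · exact Or.inr h1
    rcases hx2 with rfl | rfl
    · have h1 : Filter.Tendsto σ (nhdsWithin (1/2) (Set.Ioi (1/2))) (nhds (σ (1/2))) :=
        (hσc.continuousAt.continuousWithinAt).tendsto
      have h2 : Filter.Tendsto σ (nhdsWithin (1/2) (Set.Ioi (1/2))) (nhds 0) := by
        apply Filter.Tendsto.congr' _ tendsto_const_nhds
        filter_upwards [self_mem_nhdsWithin] with y hy
        exact (h0 y (by rw [Set.mem_Ioi] at hy; rw [abs_of_pos (by linarith)]; linarith)).symm
      exact tendsto_nhds_unique h1 h2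
    · have h1 : Filter.Tendsto σ (nhdsWithin (-(1/2)) (Set.Iio (-(1/2)))) (nhds (σ (-(1/2)))) :=
        (hσc.continuousAt.continuousWithinAt).tendsto
      have h2 : Filter.Tendsto σ (nhdsWithin (-(1/2)) (Set.Iio (-(1/2)))) (nhds 0) := by
        apply Filter.Tendsto.congr' _ tendsto_const_nhds
        filter_upwards [self_mem_nhdsWithin] with y hy
        exact (h0 y (by rw [Set.mem_Iio] at hy; rw [abs_of_neg (by linarith)]; linarith)).symm
      exact tendsto_nhds_unique h1 h2
  · exact h0 x h

lemma sigma_bounds (χ σ : ℝ → ℝ) (hmoll : MollifierData χ σ) :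
    ∀ x : ℝ, 0 ≤ σ x ∧ σ x ≤ 1/100 := by
  obtain ⟨hχs, hχsupp, hχ01, hχint, hσs, hσsupp, hσ14, hσ12⟩ := hmoll
  intro x
  rcases le_or_gt |x| (1/4) with h | h
  · rw [hσ14 x h]; norm_num
  · rcases lt_or_ge |x| (1/2) with h2 | h2
    · exact ⟨(hσ12 x h h2).1.le, (hσ12 x h h2).2⟩
    · rw [sigma_zero_of_half_le σ hσs.continuous hσsupp x h2]; norm_num

lemma mollify_bound (χ σ : ℝ → ℝ) (hmoll : MollifierData χ σ)
    (f : ℝ → ℝ) (hf : Continuous f) (δ : ℝ)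
    (M : ℝ) (hM : ∀ a b : ℝ, |a - b| ≤ δ ^ 2 / 100 → |f a - f b| ≤ M) (t : ℝ) :
    |mollify χ σ δ f t - f t| ≤ M := by
  obtain ⟨hχs, hχsupp, hχ01, hχint, hσs, hσsupp, hσ14, hσ12⟩ := hmoll
  have hχc : Continuous χ := hχs.continuous
  have hχcs : HasCompactSupport χ :=
    isCompact_Icc.of_isClosed_subset (isClosed_tsupport χ) hχsupp
  have hχi : Integrable χ := hχc.integrable_of_hasCompactSupport hχcs
  set c := sigmaDelta σ δ t with hc
  have hσb := sigma_bounds χ σ ⟨hχs, hχsupp, hχ01, hχint, hσs, hσsupp, hσ14, hσ12⟩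
  have hc0 : 0 ≤ c := mul_nonneg (sq_nonneg δ) (hσb _).1
  have hcle : c ≤ δ ^ 2 / 100 := by
    have h2 := (hσb (t/δ)).2
    have := mul_le_mul_of_nonneg_left h2 (sq_nonneg δ)
    calc c = δ ^ 2 * σ (t / δ) := rfl
      _ ≤ δ ^ 2 * (1/100) := this
      _ = δ ^ 2 / 100 := by ring
  have hgc : Continuous (fun s => (f (t - c * s) - f t) * χ s) :=
    ((hf.comp (by continuity)).sub continuous_const).mul hχc
  have hgcs : HasCompactSupport (fun s => (f (t - c * s) - f t) * χ s) :=
    hχcs.mul_left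
  have hgi : Integrable (fun s => (f (t - c * s) - f t) * χ s) :=
    hgc.integrable_of_hasCompactSupport hgcs
  have hg2c : Continuous (fun s => f (t - c * s) * χ s) :=
    (hf.comp (by continuity)).mul hχc
  have hg2i : Integrable (fun s => f (t - c * s) * χ s) :=
    hg2c.integrable_of_hasCompactSupport hχcs.mul_left
  have hfti : Integrable (fun s => f t * χ s) := hχi.const_mul _
  have key : mollify χ σ δ f t - f t = ∫ s, (f (t - c * s) - f t) * χ s := by
    have hm : mollify χ σ δ f t = ∫ s, f (t - c * s) * χ s := rfl
    have hft : f t = ∫ s, f t * χ s := by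
      rw [MeasureTheory.integral_const_mul, hχint, mul_one]
    rw [hm]
    conv_lhs => rw [hft]
    rw [← MeasureTheory.integral_sub hg2i hfti]
    congr 1
    ext s
    ring
  have hM0 : 0 ≤ M := by
    have := hM 0 0 (by simp; positivity)
    simpa using this
  rw [key]
  calc |∫ s, (f (t - c * s) - f t) * χ s|
      ≤ ∫ s, |(f (t - c * s) - f t) * χ s| := by
        simpa only [Real.norm_eq_abs] using
          MeasureTheory.norm_integral_le_integral_norm (fun s => (f (t - c * s) - f t) * χ s)
    _ ≤ ∫ s, M * χ s := by
        apply MeasureTheory.integral_mono hgi.abs (hχi.const_mul M)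
        intro s
        by_cases hs : χ s = 0
        · simp [hs]
        · have hs1 : |s| ≤ 1 := by
            have : s ∈ tsupport χ := subset_closure hs
            have := hχsupp this
            rw [Set.mem_Icc] at this
            exact abs_le.mpr this
          have hab : |(t - c * s) - t| ≤ δ ^ 2 / 100 := by
            have : |(t - c * s) - t| = c * |s| := by
              rw [show (t - c * s) - t = -(c * s) by ring, abs_neg, abs_mul,
                abs_of_nonneg hc0]
            rw [this]
            calc c * |s| ≤ c * 1 := mul_le_mul_of_nonneg_left hs1 hc0
              _ = c := mul_one c
              _ ≤ δ ^ 2 / 100 := hcle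
          have := hM _ _ hab
          calc |(f (t - c * s) - f t) * χ s| = |f (t - c * s) - f t| * χ s := by
                rw [abs_mul, abs_of_nonneg (hχ01 s).1]
            _ ≤ M * χ s := mul_le_mul_of_nonneg_right this (hχ01 s).1
    _ = M := by rw [MeasureTheory.integral_const_mul, hχint, mul_one]

/-- Basic properties of the mollification `f_δ` of a continuous function `f`:
(i) `f_δ(t) = f(t)` whenever `σ_δ(t) = 0`, and in particular whenever `|t| ≥ δ/2`;
(ii) `|f_δ(t) − f(t)|` is bounded by any modulus `M` of the oscillation of `f` at
scale `δ²/100`; in particular if `f` is uniformly continuous then `f_δ → f` uniformly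
as `δ → 0⁺`. -/
theorem mollify_approx (χ σ : ℝ → ℝ) (hmoll : MollifierData χ σ)
    (f : ℝ → ℝ) (hf : Continuous f) (δ : ℝ) (hδ : 0 < δ) :
    (∀ t, sigmaDelta σ δ t = 0 → mollify χ σ δ f t = f t) ∧
    (∀ t, δ / 2 ≤ |t| → mollify χ σ δ f t = f t) ∧
    (∀ M : ℝ, (∀ a b : ℝ, |a - b| ≤ δ ^ 2 / 100 → |f a - f b| ≤ M) →
      ∀ t, |mollify χ σ δ f t - f t| ≤ M) ∧
    (UniformContinuous f →
      ∀ ε > (0 : ℝ), ∃ δ₀ > (0 : ℝ), ∀ δ' : ℝ, 0 < δ' → δ' < δ₀ →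
        ∀ t, |mollify χ σ δ' f t - f t| < ε) := by
  obtain ⟨hχs, hχsupp, hχ01, hχint, hσs, hσsupp, hσ14, hσ12⟩ := hmoll
  have hmoll' : MollifierData χ σ := ⟨hχs, hχsupp, hχ01, hχint, hσs, hσsupp, hσ14, hσ12⟩
  have hzero : ∀ t, sigmaDelta σ δ t = 0 → mollify χ σ δ f t = f t := by
    intro t h
    unfold mollify
    rw [h]
    simp only [zero_mul, sub_zero]
    rw [MeasureTheory.integral_const_mul, hχint, mul_one]
  refine ⟨hzero, ?_, fun M hM t => mollify_bound χ σ hmoll' f hf δ M hM t, ?_⟩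
  · intro t ht
    apply hzero
    unfold sigmaDelta
    rw [sigma_zero_of_half_le σ hσs.continuous hσsupp (t / δ) ?_, mul_zero]
    rw [abs_div, abs_of_pos hδ]
    rw [le_div_iff₀ hδ]
    linarith
  · intro hu ε hε
    obtain ⟨d, hd, hball⟩ := Metric.uniformContinuous_iff.mp hu (ε/2) (by positivity)
    refine ⟨min 1 d, lt_min one_pos hd, fun δ' hδ'0 hδ'lt t => ?_⟩
    have h1 : δ' < 1 := lt_of_lt_of_le hδ'lt (min_le_left _ _)
    have h2 : δ' < d := lt_of_lt_of_le hδ'lt (min_le_right _ _)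
    have hM : ∀ a b : ℝ, |a - b| ≤ δ' ^ 2 / 100 → |f a - f b| ≤ ε/2 := by
      intro a b hab
      have hlt : dist a b < d := by
        rw [Real.dist_eq]
        have : δ' ^ 2 / 100 < d := by nlinarith
        linarith
      have := hball hlt
      rw [Real.dist_eq] at this
      linarith
    have := mollify_bound χ σ hmoll' f hf δ' (ε/2) hM t
    linarith
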